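/- arXiv:1701.06731 — 4 statements merged into one kernel-verified Lean document; each statement's English description precedes it below -/
import Mathlib

section
/- Let f : Finset(V) × X → ℝ be a reward function that is nonnegative, adaptive monotone, and ζ-weakly adaptive submodular for some constant ζ ≥ 1. Let π_g be a greedy policy run for ℓ ≥ 1 steps, and let π* be any policy run for k ≥ 1 steps. If f_avg(π*, k) > 0, then f_avg(π_g, ℓ) > (1 − e^{−ℓ/(ζk)}) · f_avg(π*, k). -/
attribute [local instance] Classical.propDecidable

noncomputable section

/-- A state `x` is consistent with partial realization `ψ` if every recorded
action–outcome pair agrees with the outcome model `μ`. -/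
def Consistent {X V Y : Type*} (μ : V → X → Y) (x : X) (ψ : Finset (V × Y)) : Prop :=
  ∀ e ∈ ψ, μ e.1 x = e.2

/-- The set of actions occurring in a partial realization. -/
def acts {V Y : Type*} (ψ : Finset (V × Y)) : Finset V := ψ.image Prod.fst

/-- `P[ψ]`: total prior probability of the states consistent with `ψ`. -/
def probP {X V Y : Type*} [Fintype X] (p : X → ℝ) (μ : V → X → Y)
    (ψ : Finset (V × Y)) : ℝ :=
  ∑ x ∈ Finset.univ.filter (fun x => Consistent μ x ψ), p x

/-- Conditional expected marginal benefit `Δ(v|ψ)` of action `v` given `ψ`. -/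
def margBen {X V Y : Type*} [Fintype X] (p : X → ℝ) (μ : V → X → Y)
    (f : Finset V → X → ℝ) (v : V) (ψ : Finset (V × Y)) : ℝ :=
  (probP p μ ψ)⁻¹ *
    ∑ x ∈ Finset.univ.filter (fun x => Consistent μ x ψ),
      p x * (f (insert v (acts ψ)) x - f (acts ψ) x)

/-- Adaptive monotonicity: every conditional expected marginal benefit is nonnegative. -/
def AdaptiveMonotone {X V Y : Type*} [Fintype X] (p : X → ℝ) (μ : V → X → Y)
    (f : Finset V → X → ℝ) : Prop :=
  ∀ (v : V) (ψ : Finset (V × Y)), 0 < probP p μ ψ → 0 ≤ margBen p μ f v ψ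

/-- `ζ`-weak adaptive submodularity. -/
def WeakAdaptiveSubmodular {X V Y : Type*} [Fintype X] (p : X → ℝ) (μ : V → X → Y)
    (f : Finset V → X → ℝ) (ζ : ℝ) : Prop :=
  ∀ ψ ψ' : Finset (V × Y), ψ ⊆ ψ' → 0 < probP p μ ψ' →
    ∀ v ∉ acts ψ', margBen p μ f v ψ' ≤ ζ * margBen p μ f v ψ

/-- History of action–outcome pairs generated by running policy `π` for `t`
steps under true state `x`. -/
def hist {X V Y : Type*} (μ : V → X → Y) (π : List (V × Y) → V) (x : X) :
    ℕ → List (V × Y)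
  | 0 => []
  | t + 1 =>
      hist μ π x t ++ [(π (hist μ π x t), μ (π (hist μ π x t)) x)]

/-- The set of actions appearing in a history. -/
def actsOf {V Y : Type*} (h : List (V × Y)) : Finset V := (h.map Prod.fst).toFinset

/-- Average reward `f_avg(π, t)` of policy `π` at horizon `t`. -/
def favg {X V Y : Type*} [Fintype X] (p : X → ℝ) (μ : V → X → Y)
    (f : Finset V → X → ℝ) (π : List (V × Y) → V) (t : ℕ) : ℝ :=
  ∑ x, p x * f (actsOf (hist μ π x t)) x

/-- A greedy policy: at every history reachable under some state of positive
prior probability, the chosen action maximizes the conditional expected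
marginal benefit. -/
def IsGreedy {X V Y : Type*} [Fintype X] (p : X → ℝ) (μ : V → X → Y)
    (f : Finset V → X → ℝ) (π : List (V × Y) → V) : Prop :=
  ∀ x : X, 0 < p x → ∀ t : ℕ, ∀ v : V,
    margBen p μ f v (hist μ π x t).toFinset ≤
      margBen p μ f (π (hist μ π x t)) (hist μ π x t).toFinset

/-!
Run the optimal policy `π*` for `k` steps on top of the first `t` greedy steps, and observe
both runs jointly. Adding the greedy steps cannot lower the expected reward (adaptive
monotonicity), and by weak adaptive submodularity each of the `k` steps of `π*` gains at
most `ζ` times the expected gain of the greedy step `t + 1`. Hence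
`OPT ≤ g t + ζ k (g (t + 1) - g t)` for the greedy values `g t`, so the gap `OPT - g t`
shrinks by a factor `1 - 1 / (ζ k) < exp (-1 / (ζ k))` at every step.
-/

open Finset

lemma Finset.sum_eq_sum_of_forall_fiber_eq {ι κ M : Type*} [Fintype ι] [DecidableEq κ]
    [AddCommMonoid M] (g : ι → κ) {φ ψ : ι → M}
    (h : ∀ i₀, ∑ i ∈ univ.filter (fun i => g i = g i₀), φ i =
      ∑ i ∈ univ.filter (fun i => g i = g i₀), ψ i) :
    ∑ i, φ i = ∑ i, ψ i := by
  have hg : ∀ i ∈ (univ : Finset ι), g i ∈ univ.image g :=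
    fun i _ => mem_image_of_mem g (mem_univ i)
  rw [← sum_fiberwise_of_maps_to hg φ, ← sum_fiberwise_of_maps_to hg ψ]
  refine sum_congr rfl fun c hc => ?_
  obtain ⟨i₀, -, rfl⟩ := mem_image.1 hc
  exact h i₀

section Realization

variable {X V Y : Type*} {p : X → ℝ} {μ : V → X → Y} {f : Finset V → X → ℝ}

lemma Consistent.mono {x : X} {ψ₀ ψ : Finset (V × Y)} (h : Consistent μ x ψ) (hψ : ψ₀ ⊆ ψ) :
    Consistent μ x ψ₀ :=
  fun e he => h e (hψ he)

lemma consistent_union {x : X} {ψ ψ' : Finset (V × Y)} :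
    Consistent μ x (ψ ∪ ψ') ↔ Consistent μ x ψ ∧ Consistent μ x ψ' := by
  simp only [Consistent, mem_union, or_imp, forall_and]

lemma acts_union (ψ ψ' : Finset (V × Y)) : acts (ψ ∪ ψ') = acts ψ ∪ acts ψ' :=
  image_union _ _

/-- `R x` is the partial realization observed under the true state `x`: the observation
identifies exactly the states that produce it. -/
def IsRealizationMap (μ : V → X → Y) (R : X → Finset (V × Y)) : Prop :=
  ∀ x x', Consistent μ x' (R x) ↔ R x' = R x

lemma IsRealizationMap.consistent {R : X → Finset (V × Y)} (hR : IsRealizationMap μ R) (x : X) :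
    Consistent μ x (R x) :=
  (hR x x).2 rfl

variable [Fintype X]

lemma le_probP_of_consistent (hp : ∀ x, 0 ≤ p x) {x : X} {ψ : Finset (V × Y)}
    (hx : Consistent μ x ψ) : p x ≤ probP p μ ψ :=
  single_le_sum (fun x _ => hp x) (mem_filter.2 ⟨mem_univ x, hx⟩)

lemma probP_le_of_subset (hp : ∀ x, 0 ≤ p x) {ψ₀ ψ : Finset (V × Y)} (hψ : ψ₀ ⊆ ψ) :
    probP p μ ψ ≤ probP p μ ψ₀ :=
  sum_le_sum_of_subset_of_nonneg
    (fun x hx => mem_filter.2 ⟨mem_univ x, (mem_filter.1 hx).2.mono hψ⟩) fun x _ _ => hp x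

lemma margBen_eq_zero_of_mem {v : V} {ψ : Finset (V × Y)} (hv : v ∈ acts ψ) :
    margBen p μ f v ψ = 0 := by
  simp [margBen, insert_eq_of_mem hv]

lemma probP_mul_margBen (hp : ∀ x, 0 ≤ p x) (v : V) (ψ : Finset (V × Y)) :
    probP p μ ψ * margBen p μ f v ψ =
      ∑ x ∈ univ.filter (fun x => Consistent μ x ψ),
        p x * (f (insert v (acts ψ)) x - f (acts ψ) x) := by
  have hP : 0 ≤ probP p μ ψ := sum_nonneg fun x _ => hp x
  rcases hP.eq_or_lt with h | h
  · have hp0 : ∀ x ∈ univ.filter (fun x => Consistent μ x ψ), p x = 0 :=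
      (sum_eq_zero_iff_of_nonneg fun x _ => hp x).1 h.symm
    rw [← h, zero_mul, sum_eq_zero fun x hx => by rw [hp0 x hx, zero_mul]]
  · rw [margBen, mul_inv_cancel_left₀ h.ne']

lemma mul_margBen_nonneg (hp : ∀ x, 0 ≤ p x) (hmono : AdaptiveMonotone p μ f) {x : X}
    {ψ : Finset (V × Y)} (hx : Consistent μ x ψ) (v : V) :
    0 ≤ p x * margBen p μ f v ψ := by
  rcases (hp x).eq_or_lt with h | h
  · rw [← h, zero_mul]
  · exact mul_nonneg h.le (hmono v ψ (h.trans_le (le_probP_of_consistent hp hx)))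

lemma margBen_le_mul_margBen_of_forall_le (hp : ∀ x, 0 ≤ p x) (hmono : AdaptiveMonotone p μ f)
    {ζ : ℝ} (hζ : 0 ≤ ζ) (hsub : WeakAdaptiveSubmodular p μ f ζ) {ψ₀ ψ : Finset (V × Y)}
    (hψ : ψ₀ ⊆ ψ) (hP : 0 < probP p μ ψ) {b : V}
    (hb : ∀ w, margBen p μ f w ψ₀ ≤ margBen p μ f b ψ₀) (v : V) :
    margBen p μ f v ψ ≤ ζ * margBen p μ f b ψ₀ := by
  by_cases hv : v ∈ acts ψ
  · rw [margBen_eq_zero_of_mem hv]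
    exact mul_nonneg hζ (hmono b ψ₀ (hP.trans_le (probP_le_of_subset hp hψ)))
  · exact (hsub ψ₀ ψ hψ hP v hv).trans (mul_le_mul_of_nonneg_left (hb v) hζ)

/-- Tower property of conditional expectation. -/
lemma sum_mul_margBen_eq_sub (hp : ∀ x, 0 ≤ p x) {R : X → Finset (V × Y)}
    (hR : IsRealizationMap μ R) {a : X → V} (ha : ∀ x x', R x' = R x → a x' = a x) :
    ∑ x, p x * margBen p μ f (a x) (R x) =
      ∑ x, p x * f (insert (a x) (acts (R x))) x - ∑ x, p x * f (acts (R x)) x := by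
  rw [← sum_sub_distrib]
  refine sum_eq_sum_of_forall_fiber_eq R fun x₀ => ?_
  have hfiber :
      univ.filter (fun x => R x = R x₀) = univ.filter (fun x => Consistent μ x (R x₀)) := by
    ext x
    simp [hR x₀ x]
  calc ∑ x ∈ univ.filter (fun x => R x = R x₀), p x * margBen p μ f (a x) (R x)
      = ∑ x ∈ univ.filter (fun x => R x = R x₀), p x * margBen p μ f (a x₀) (R x₀) :=
        sum_congr rfl fun x hx => by rw [(mem_filter.1 hx).2, ha x₀ x (mem_filter.1 hx).2]
    _ = probP p μ (R x₀) * margBen p μ f (a x₀) (R x₀) := by rw [← sum_mul, hfiber]; rfl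
    _ = _ := by
        rw [probP_mul_margBen hp, ← hfiber]
        refine sum_congr rfl fun x hx => ?_
        rw [mul_sub, (mem_filter.1 hx).2, ha x₀ x (mem_filter.1 hx).2]

end Realization

section Policies

variable {X V Y : Type*} {p : X → ℝ} {μ : V → X → Y} {f : Finset V → X → ℝ}

lemma acts_toFinset (h : List (V × Y)) : acts h.toFinset = actsOf h := by
  ext v
  simp [acts, actsOf]

lemma acts_hist_succ (π : List (V × Y) → V) (x : X) (t : ℕ) :
    acts (hist μ π x (t + 1)).toFinset =
      insert (π (hist μ π x t)) (acts (hist μ π x t).toFinset) := by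
  rw [hist, List.toFinset_append, acts_union, union_comm, insert_eq]
  congr 1

lemma consistent_hist_self (π : List (V × Y) → V) (x : X) (t : ℕ) :
    Consistent μ x (hist μ π x t).toFinset := by
  induction t with
  | zero => simp [Consistent, hist]
  | succ t ih =>
    rw [hist, List.toFinset_append, consistent_union]
    exact ⟨ih, by simp [Consistent]⟩

lemma consistent_hist_iff (π : List (V × Y) → V) (x x' : X) (t : ℕ) :
    Consistent μ x' (hist μ π x t).toFinset ↔ hist μ π x' t = hist μ π x t := by
  refine ⟨fun h => ?_, fun h => h ▸ consistent_hist_self π x' t⟩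
  induction t with
  | zero => rfl
  | succ t ih =>
    rw [hist, List.toFinset_append, consistent_union] at h
    have hlast : μ (π (hist μ π x t)) x' = μ (π (hist μ π x t)) x := by
      simpa [Consistent] using h.2
    rw [hist, hist, ih h.1, hlast]

/-- `π₂` runs on its own history, without seeing the observations of `π₁`. -/
def jointRealization (μ : V → X → Y) (π₁ π₂ : List (V × Y) → V) (i j : ℕ) (x : X) :
    Finset (V × Y) :=
  (hist μ π₁ x i).toFinset ∪ (hist μ π₂ x j).toFinset

lemma consistent_jointRealization_iff {π₁ π₂ : List (V × Y) → V} {i j : ℕ} {x x' : X} :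
    Consistent μ x' (jointRealization μ π₁ π₂ i j x) ↔
      hist μ π₁ x' i = hist μ π₁ x i ∧ hist μ π₂ x' j = hist μ π₂ x j := by
  rw [jointRealization, consistent_union, consistent_hist_iff, consistent_hist_iff]

lemma isRealizationMap_jointRealization (π₁ π₂ : List (V × Y) → V) (i j : ℕ) :
    IsRealizationMap μ (jointRealization μ π₁ π₂ i j) := by
  refine fun x x' => ⟨fun h => ?_, fun h => ?_⟩
  · obtain ⟨h₁, h₂⟩ := consistent_jointRealization_iff.1 h
    rw [jointRealization, jointRealization, h₁, h₂]
  · rw [← h]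
    exact consistent_jointRealization_iff.2 ⟨rfl, rfl⟩

lemma hist_eq_of_jointRealization_eq {π₁ π₂ : List (V × Y) → V} {i j : ℕ} {x x' : X}
    (h : jointRealization μ π₁ π₂ i j x' = jointRealization μ π₁ π₂ i j x) :
    hist μ π₁ x' i = hist μ π₁ x i ∧ hist μ π₂ x' j = hist μ π₂ x j :=
  consistent_jointRealization_iff.1 ((isRealizationMap_jointRealization π₁ π₂ i j x x').2 h)

lemma jointRealization_zero_right (π₁ π₂ : List (V × Y) → V) (i : ℕ) (x : X) :
    jointRealization μ π₁ π₂ i 0 x = (hist μ π₁ x i).toFinset := by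
  simp [jointRealization, hist]

variable [Fintype X]

def jointReward (p : X → ℝ) (μ : V → X → Y) (f : Finset V → X → ℝ)
    (π₁ π₂ : List (V × Y) → V) (i j : ℕ) : ℝ :=
  ∑ x, p x * f (acts (jointRealization μ π₁ π₂ i j x)) x

lemma jointReward_zero_left (π₁ π₂ : List (V × Y) → V) (j : ℕ) :
    jointReward p μ f π₁ π₂ 0 j = favg p μ f π₂ j := by
  simp [jointReward, jointRealization, favg, hist, acts_toFinset]

lemma jointReward_zero_right (π₁ π₂ : List (V × Y) → V) (i : ℕ) :
    jointReward p μ f π₁ π₂ i 0 = favg p μ f π₁ i := by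
  simp [jointReward, jointRealization_zero_right, favg, acts_toFinset]

lemma jointReward_succ_left (hp : ∀ x, 0 ≤ p x) (π₁ π₂ : List (V × Y) → V) (i j : ℕ) :
    jointReward p μ f π₁ π₂ (i + 1) j = jointReward p μ f π₁ π₂ i j +
      ∑ x, p x * margBen p μ f (π₁ (hist μ π₁ x i)) (jointRealization μ π₁ π₂ i j x) := by
  rw [sum_mul_margBen_eq_sub hp (isRealizationMap_jointRealization π₁ π₂ i j)
    fun x x' h => congrArg π₁ (hist_eq_of_jointRealization_eq h).1]
  simp only [jointReward, jointRealization, acts_union, acts_hist_succ, insert_union,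
    add_sub_cancel]

lemma jointReward_succ_right (hp : ∀ x, 0 ≤ p x) (π₁ π₂ : List (V × Y) → V) (i j : ℕ) :
    jointReward p μ f π₁ π₂ i (j + 1) = jointReward p μ f π₁ π₂ i j +
      ∑ x, p x * margBen p μ f (π₂ (hist μ π₂ x j)) (jointRealization μ π₁ π₂ i j x) := by
  rw [sum_mul_margBen_eq_sub hp (isRealizationMap_jointRealization π₁ π₂ i j)
    fun x x' h => congrArg π₂ (hist_eq_of_jointRealization_eq h).2]
  simp only [jointReward, jointRealization, acts_union, acts_hist_succ, union_insert,
    add_sub_cancel]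

lemma jointReward_le_succ_left (hp : ∀ x, 0 ≤ p x) (hmono : AdaptiveMonotone p μ f)
    (π₁ π₂ : List (V × Y) → V) (i j : ℕ) :
    jointReward p μ f π₁ π₂ i j ≤ jointReward p μ f π₁ π₂ (i + 1) j := by
  rw [jointReward_succ_left hp, le_add_iff_nonneg_right]
  exact sum_nonneg fun x _ => mul_margBen_nonneg hp hmono
    ((isRealizationMap_jointRealization π₁ π₂ i j).consistent x) _

lemma jointReward_succ_right_sub_le (hp : ∀ x, 0 ≤ p x) (hmono : AdaptiveMonotone p μ f)
    {ζ : ℝ} (hζ : 0 ≤ ζ) (hsub : WeakAdaptiveSubmodular p μ f ζ) {πg : List (V × Y) → V}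
    (hg : IsGreedy p μ f πg) (π₂ : List (V × Y) → V) (t j : ℕ) :
    jointReward p μ f πg π₂ t (j + 1) - jointReward p μ f πg π₂ t j ≤
      ζ * (favg p μ f πg (t + 1) - favg p μ f πg t) := by
  rw [← jointReward_zero_right πg π₂, ← jointReward_zero_right πg π₂, jointReward_succ_left hp,
    jointReward_succ_right hp, add_sub_cancel_left, add_sub_cancel_left, mul_sum]
  refine sum_le_sum fun x _ => ?_
  rcases (hp x).eq_or_lt with hx | hx
  · simp [← hx]
  rw [mul_left_comm, jointRealization_zero_right]
  refine mul_le_mul_of_nonneg_left (margBen_le_mul_margBen_of_forall_le hp hmono hζ hsub ?_ ?_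
    (hg x hx t) _) hx.le
  · exact subset_union_left
  · exact hx.trans_le (le_probP_of_consistent hp
      ((isRealizationMap_jointRealization πg π₂ t j).consistent x))

lemma favg_le_favg_add_mul_sub (hp : ∀ x, 0 ≤ p x) (hmono : AdaptiveMonotone p μ f)
    {ζ : ℝ} (hζ : 0 ≤ ζ) (hsub : WeakAdaptiveSubmodular p μ f ζ) {πg : List (V × Y) → V}
    (hg : IsGreedy p μ f πg) (πs : List (V × Y) → V) (k t : ℕ) :
    favg p μ f πs k ≤
      favg p μ f πg t + ζ * k * (favg p μ f πg (t + 1) - favg p μ f πg t) := by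
  have hsteps : ∀ j : ℕ, jointReward p μ f πg πs t j ≤
      favg p μ f πg t + ζ * j * (favg p μ f πg (t + 1) - favg p μ f πg t) := by
    intro j
    induction j with
    | zero => simp [jointReward_zero_right]
    | succ j ih =>
      have := jointReward_succ_right_sub_le hp hmono hζ hsub hg πs t j
      push_cast
      linarith
  calc favg p μ f πs k = jointReward p μ f πg πs 0 k := (jointReward_zero_left πg πs k).symm
    _ ≤ jointReward p μ f πg πs t k :=
      monotone_nat_of_le_succ (fun i => jointReward_le_succ_left hp hmono πg πs i k) t.zero_le
    _ ≤ _ := hsteps k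

end Policies

lemma one_sub_exp_mul_lt_of_le_add_mul_sub {g : ℕ → ℝ} {c A : ℝ} (hA : 1 ≤ A) (hc : 0 < c)
    (hg₀ : 0 ≤ g 0) (hstep : ∀ t, c ≤ g t + A * (g (t + 1) - g t)) {ℓ : ℕ} (hℓ : ℓ ≠ 0) :
    (1 - Real.exp (-ℓ / A)) * c < g ℓ := by
  have hA₀ : 0 < A := zero_lt_one.trans_le hA
  set r := 1 - A⁻¹ with hr
  have hr₀ : 0 ≤ r := sub_nonneg.2 (inv_le_one_of_one_le₀ hA)
  have hgap : ∀ t, c - g t ≤ r ^ t * c := by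
    intro t
    induction t with
    | zero => simpa using hg₀
    | succ t ih =>
      have hdiv : (c - g t) / A ≤ g (t + 1) - g t :=
        (div_le_iff₀ hA₀).2 (by linarith [hstep t])
      calc c - g (t + 1) ≤ r * (c - g t) := by
            rw [hr, sub_mul, one_mul, inv_mul_eq_div]
            linarith
        _ ≤ r * (r ^ t * c) := mul_le_mul_of_nonneg_left ih hr₀
        _ = r ^ (t + 1) * c := by ring
  have hr_lt : r < Real.exp (-A⁻¹) := by
    linarith [Real.add_one_lt_exp (neg_ne_zero.2 (inv_ne_zero hA₀.ne'))]
  have hpow : r ^ ℓ < Real.exp (-ℓ / A) :=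
    calc r ^ ℓ < Real.exp (-A⁻¹) ^ ℓ := pow_lt_pow_left₀ hr_lt hr₀ hℓ
      _ = Real.exp (-ℓ / A) := by rw [← Real.exp_nat_mul]; ring_nf
  nlinarith [hgap ℓ, mul_lt_mul_of_pos_right hpow hc]

theorem greedy_near_optimal_general {X V Y : Type*}
    [Fintype X]
    (p : X → ℝ) (hp : ∀ x, 0 ≤ p x)
    (μ : V → X → Y) (f : Finset V → X → ℝ)
    (hf : ∀ (A : Finset V) (x : X), 0 ≤ f A x)
    (hmono : AdaptiveMonotone p μ f)
    (ζ : ℝ) (hζ : 1 ≤ ζ)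
    (hsub : WeakAdaptiveSubmodular p μ f ζ)
    (πg πs : List (V × Y) → V) (hg : IsGreedy p μ f πg)
    (ℓ k : ℕ) (hℓ : 1 ≤ ℓ) (hk : 1 ≤ k)
    (hpos : 0 < favg p μ f πs k) :
    (1 - Real.exp (-(ℓ : ℝ) / (ζ * (k : ℝ)))) * favg p μ f πs k <
      favg p μ f πg ℓ := by
  have hζk : 1 ≤ ζ * k := one_le_mul_of_one_le_of_one_le hζ (by exact_mod_cast hk)
  refine one_sub_exp_mul_lt_of_le_add_mul_sub hζk hpos ?_
    (favg_le_favg_add_mul_sub hp hmono (zero_le_one.trans hζ) hsub hg πs k) (by omega)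
  exact sum_nonneg fun x _ => mul_nonneg (hp x) (hf _ x)

/-- performance guarantee for a greedy policy run for `ℓ` steps
against any policy run for `k` steps, for a nonnegative, adaptive monotone and
`ζ`-weakly adaptive submodular reward function. -/
theorem greedy_near_optimal {X V Y : Type*}
    [Fintype X] [Nonempty X] [Fintype V] [Nonempty V] [Fintype Y] [Nonempty Y]
    (p : X → ℝ) (hp : ∀ x, 0 ≤ p x) (hpsum : ∑ x, p x = 1)
    (μ : V → X → Y) (f : Finset V → X → ℝ)
    (hf : ∀ (A : Finset V) (x : X), 0 ≤ f A x)
    (hmono : AdaptiveMonotone p μ f)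
    (ζ : ℝ) (hζ : 1 ≤ ζ)
    (hsub : WeakAdaptiveSubmodular p μ f ζ)
    (πg πs : List (V × Y) → V) (hg : IsGreedy p μ f πg)
    (ℓ k : ℕ) (hℓ : 1 ≤ ℓ) (hk : 1 ≤ k)
    (hpos : 0 < favg p μ f πs k) :
    (1 - Real.exp (-(ℓ : ℝ) / (ζ * (k : ℝ)))) * favg p μ f πs k <
      favg p μ f πg ℓ :=
  greedy_near_optimal_general p hp μ f hf hmono ζ hζ hsub πg πs hg ℓ k hℓ hk hpos
end
end

section
/- (Adaptive monotonicity of the group-based reward.) Fix a true pair (x₀,q₀) with p(x₀,q₀) > 0. For every finite set A ⊆ V of performed actions and every action v ∈ V, the conditional expected marginal benefit is nonnegative: Δ(v|A) ≥ 0. -/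
attribute [local instance] Classical.propDecidable

noncomputable section

/-- Marginal prior `p₁(x) = ∑_q p(x,q)`. -/
def margP {X Q : Type*} [Fintype Q] (p : X × Q → ℝ) (x : X) : ℝ :=
  ∑ q : Q, p (x, q)

/-- Compatible set `S_{q̃}(A; x, q)`: states `x̃` giving, under hypothesized
mode `q̃`, the same outcomes as the pair `(x, q)` for all actions in `A`. -/
def Sset {X Q V Y : Type*} [Fintype X] (μ : V → X → Q → Y)
    (A : Finset V) (x : X) (q : Q) (q' : Q) : Finset X :=
  Finset.univ.filter (fun x' => ∀ v ∈ A, μ v x' q' = μ v x q)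

/-- Compatible union `U(A; x, q) = ⋃_{q̃ ∈ Q} S_{q̃}(A; x, q)`. -/
def Uset {X Q V Y : Type*} [Fintype X] [Fintype Q] (μ : V → X → Q → Y)
    (A : Finset V) (x : X) (q : Q) : Finset X :=
  Finset.univ.biUnion (fun q' : Q => Sset μ A x q q')

/-- Group-based reward function `f(A,(x,q)) = 1 - ∑_{x̃ ∈ U(A;x,q)} p₁(x̃)`. -/
def reward {X Q V Y : Type*} [Fintype X] [Fintype Q] (p : X × Q → ℝ)
    (μ : V → X → Q → Y) (A : Finset V) (xq : X × Q) : ℝ :=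
  1 - ∑ x' ∈ Uset μ A xq.1 xq.2, margP p x'

/-- Pairs `(x,q)` consistent with the outcomes observed under the true pair
`(x₀, q₀)` after performing the actions in `A`. -/
def Cset {X Q V Y : Type*} [Fintype X] [Fintype Q] (μ : V → X → Q → Y)
    (x₀ : X) (q₀ : Q) (A : Finset V) : Finset (X × Q) :=
  Finset.univ.filter (fun xq => ∀ v ∈ A, μ v xq.1 xq.2 = μ v x₀ q₀)

/-- `P[ψ_A]`: total prior probability of the consistent pairs. -/
def probPA {X Q V Y : Type*} [Fintype X] [Fintype Q] (p : X × Q → ℝ)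
    (μ : V → X → Q → Y) (x₀ : X) (q₀ : Q) (A : Finset V) : ℝ :=
  ∑ xq ∈ Cset μ x₀ q₀ A, p xq

/-- Conditional expected marginal benefit `Δ(v|A)` of action `v` after
performing the actions in `A`, under the true pair `(x₀, q₀)`. -/
def gmarg {X Q V Y : Type*} [Fintype X] [Fintype Q] (p : X × Q → ℝ)
    (μ : V → X → Q → Y) (x₀ : X) (q₀ : Q) (v : V) (A : Finset V) : ℝ :=
  (probPA p μ x₀ q₀ A)⁻¹ *
    ∑ xq ∈ Cset μ x₀ q₀ A,
      p xq * (reward p μ (insert v A) xq - reward p μ A xq)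

lemma Uset_insert_subset {X Q V Y : Type*} [Fintype X] [Fintype Q]
    (μ : V → X → Q → Y) (A : Finset V) (v : V) (x : X) (q : Q) :
    Uset μ (insert v A) x q ⊆ Uset μ A x q := by
  intro x' hx'
  simp only [Uset, Sset, Finset.mem_biUnion, Finset.mem_filter, Finset.mem_univ,
    true_and] at hx' ⊢
  obtain ⟨q', hq'⟩ := hx'
  exact ⟨q', fun w hw => hq' w (Finset.mem_insert_of_mem hw)⟩

/-- adaptive monotonicity of the group-based reward: every
conditional expected marginal benefit `Δ(v|A)` is nonnegative. -/
theorem gmarg_nonneg {X Q V Y : Type*}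
    [Fintype X] [Nonempty X] [Fintype Q] [Nonempty Q]
    [Fintype V] [Nonempty V] [Fintype Y] [Nonempty Y]
    (p : X × Q → ℝ) (hp : ∀ xq, 0 ≤ p xq) (hpsum : ∑ xq : X × Q, p xq = 1)
    (μ : V → X → Q → Y) (x₀ : X) (q₀ : Q) (h₀ : 0 < p (x₀, q₀))
    (A : Finset V) (v : V) :
    0 ≤ gmarg p μ x₀ q₀ v A := by
  apply mul_nonneg
  · apply inv_nonneg.mpr
    exact Finset.sum_nonneg fun xq _ => hp xq
  · apply Finset.sum_nonneg
    intro xq _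
    apply mul_nonneg (hp xq)
    rw [sub_nonneg]
    unfold reward
    apply sub_le_sub_left
    apply Finset.sum_le_sum_of_subset_of_nonneg (Uset_insert_subset μ A v xq.1 xq.2)
    intro x' _ _
    exact Finset.sum_nonneg fun q _ => hp (x', q)
end
end

section
/- Let n ≥ 1 and let s, τ ∈ ℝⁿ satisfy 0 ≤ s_i ≤ τ_i for all 1 ≤ i ≤ n, with ∑_{i=1}^n s_i > 0. Then the function b(τ₁,…,τ_n) = ∑_{i=1}^n τ_i − (∑_{i=1}^n τ_i²)/(∑_{i=1}^n τ_i) is increasing on the positive orthant: b(s₁,…,s_n) ≤ b(τ₁,…,τ_n). -/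
open Finset

lemma key_step (A B a b : ℝ) (hB : 0 ≤ B) (hab : a ≤ b) (hA : 0 < A + a) :
    (A + a) - (B + a ^ 2) / (A + a) ≤ (A + b) - (B + b ^ 2) / (A + b) := by
  have h2 : 0 < A + b := by linarith
  have e1 : (A + a) - (B + a ^ 2) / (A + a) = ((A + a) ^ 2 - (B + a ^ 2)) / (A + a) := by
    field_simp
  have e2 : (A + b) - (B + b ^ 2) / (A + b) = ((A + b) ^ 2 - (B + b ^ 2)) / (A + b) := by
    field_simp
  rw [e1, e2, div_le_div_iff₀ hA h2]
  nlinarith [mul_nonneg (sub_nonneg.2 hab) (by positivity : (0:ℝ) ≤ A ^ 2 + B)]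

lemma update_step (n : ℕ) (x : Fin n → ℝ) (hx : ∀ i, 0 ≤ x i)
    (hsum : 0 < ∑ i, x i) (j : Fin n) (t : ℝ) (ht : x j ≤ t) :
    (∑ i, x i) - (∑ i, (x i) ^ 2) / (∑ i, x i) ≤
      (∑ i, Function.update x j t i) -
        (∑ i, (Function.update x j t i) ^ 2) / (∑ i, Function.update x j t i) := by
  classical
  set A := ∑ i ∈ univ.erase j, x i with hA
  set B := ∑ i ∈ univ.erase j, (x i) ^ 2 with hB
  have h1 : ∑ i, x i = A + x j := by
    rw [hA, ← Finset.add_sum_erase _ _ (mem_univ j)]; ring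
  have h2 : ∑ i, (x i) ^ 2 = B + (x j) ^ 2 := by
    rw [hB, ← Finset.add_sum_erase _ _ (mem_univ j)]; ring
  have h3 : ∑ i, Function.update x j t i = A + t := by
    rw [← Finset.add_sum_erase _ _ (mem_univ j), Function.update_self]
    rw [add_comm]
    congr 1
    exact Finset.sum_congr rfl fun i hi =>
      Function.update_of_ne (Finset.ne_of_mem_erase hi) _ _
  have h4 : ∑ i, (Function.update x j t i) ^ 2 = B + t ^ 2 := by
    rw [← Finset.add_sum_erase _ _ (mem_univ j), Function.update_self]
    rw [add_comm]
    congr 1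
    exact Finset.sum_congr rfl fun i hi => by
      rw [Function.update_of_ne (Finset.ne_of_mem_erase hi)]
  rw [h1, h2, h3, h4]
  refine key_step A B (x j) t ?_ ht ?_
  · exact Finset.sum_nonneg fun i _ => sq_nonneg _
  · rw [← h1]; exact hsum

/-- the function `b(τ) = ∑ τ_i - (∑ τ_i²)/(∑ τ_i)` is increasing
on the positive orthant. -/
theorem b_increasing (n : ℕ) (hn : 1 ≤ n) (s τ : Fin n → ℝ)
    (hs : ∀ i, 0 ≤ s i) (hsτ : ∀ i, s i ≤ τ i) (hpos : 0 < ∑ i, s i) :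
    (∑ i, s i) - (∑ i, (s i) ^ 2) / (∑ i, s i) ≤
      (∑ i, τ i) - (∑ i, (τ i) ^ 2) / (∑ i, τ i) := by
  classical
  set v : ℕ → Fin n → ℝ := fun k i => if (i : ℕ) < k then τ i else s i with hv
  have hv0 : v 0 = s := by funext i; simp [hv]
  have hvn : v n = τ := by funext i; simp [hv, i.isLt]
  have hge : ∀ k i, s i ≤ v k i := by
    intro k i; by_cases h : (i : ℕ) < k <;> simp [hv, h, hsτ i]
  have hnn : ∀ k i, 0 ≤ v k i := fun k i => (hs i).trans (hge k i)
  have hsum : ∀ k, 0 < ∑ i, v k i := fun k =>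
    hpos.trans_le (Finset.sum_le_sum fun i _ => hge k i)
  have key : ∀ k, k ≤ n →
      (∑ i, s i) - (∑ i, (s i) ^ 2) / (∑ i, s i) ≤
        (∑ i, v k i) - (∑ i, (v k i) ^ 2) / (∑ i, v k i) := by
    intro k
    induction k with
    | zero => intro _; rw [hv0]
    | succ k ih =>
      intro hk
      have hkn : k < n := hk
      refine (ih hkn.le).trans ?_
      have hupd : v (k + 1) = Function.update (v k) ⟨k, hkn⟩ (τ ⟨k, hkn⟩) := by
        funext i
        rcases eq_or_ne i ⟨k, hkn⟩ with h | h
        · subst h; simp [hv, Function.update_self]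
        · rw [Function.update_of_ne h]
          have hik : (i : ℕ) ≠ k := fun hh => h (Fin.ext hh)
          have : (i : ℕ) < k + 1 ↔ (i : ℕ) < k := by omega
          simp [hv, this]
      rw [hupd]
      refine update_step n (v k) (hnn k) (hsum k) _ _ ?_
      simp [hv, hsτ ⟨k, hkn⟩]
  have := key n le_rfl
  rwa [hvn] at this
end

section
/- Fix a true pair (x₀,q₀) with p(x₀,q₀) > 0, a finite set A ⊆ V of performed actions, and an action v ∈ V. For each outcome y ∈ Y, define τ_y := ∑_{(x,q)∈C(A), μ(v,x,q)=y} p(x,q) and w_y := ∑_{x̃ ∈ ⋃_{q̃∈Q} {x̃ ∈ S_{q̃}(A;x₀,q₀) : μ(v,x̃,q̃) = y}} p₁(x̃). Then ∑_{(x,q)∈C(A)} p(x,q) · (∑_{x̃ ∈ U(A∪{v};x,q)} p₁(x̃)) = ∑_{y∈Y} τ_y · w_y. -/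
attribute [local instance] Classical.propDecidable

noncomputable section

/-- partitioning by outcomes,
`∑_{(x,q) ∈ C(A)} p(x,q) (∑_{x̃ ∈ U(A ∪ {v}; x, q)} p₁(x̃)) = ∑_y τ_y w_y`,
where `τ_y` sums `p` over consistent pairs with outcome `y` under `v`, and
`w_y` sums `p₁` over `⋃_{q̃} {x̃ ∈ S_{q̃}(A;x₀,q₀) : μ(v,x̃,q̃) = y}`. -/
theorem sum_over_consistent_eq_sum_over_outcomes {X Q V Y : Type*}
    [Fintype X] [Nonempty X] [Fintype Q] [Nonempty Q]
    [Fintype V] [Nonempty V] [Fintype Y] [Nonempty Y]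
    (p : X × Q → ℝ) (hp : ∀ xq, 0 ≤ p xq) (hpsum : ∑ xq : X × Q, p xq = 1)
    (μ : V → X → Q → Y) (x₀ : X) (q₀ : Q) (h₀ : 0 < p (x₀, q₀))
    (A : Finset V) (v : V) :
    ∑ xq ∈ Cset μ x₀ q₀ A,
        p xq * (∑ x' ∈ Uset μ (insert v A) xq.1 xq.2, margP p x') =
      ∑ y : Y,
        (∑ xq ∈ (Cset μ x₀ q₀ A).filter (fun xq => μ v xq.1 xq.2 = y), p xq) *
          (∑ x' ∈ Finset.univ.biUnion
              (fun q' : Q => (Sset μ A x₀ q₀ q').filter (fun x' => μ v x' q' = y)),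
            margP p x') := by
  have key : ∀ xq ∈ Cset μ x₀ q₀ A,
      Uset μ (insert v A) xq.1 xq.2 =
        Finset.univ.biUnion (fun q' : Q =>
          (Sset μ A x₀ q₀ q').filter (fun x' => μ v x' q' = μ v xq.1 xq.2)) := by
    intro xq hxq
    have hC : ∀ w ∈ A, μ w xq.1 xq.2 = μ w x₀ q₀ := by
      simpa [Cset] using hxq
    ext x'
    simp only [Uset, Sset, Finset.mem_biUnion, Finset.mem_filter, Finset.mem_univ,
      true_and, Finset.mem_insert]
    constructor
    · rintro ⟨q', hq'⟩
      refine ⟨q', ?_, ?_⟩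
      · intro w hw
        rw [hq' w (Or.inr hw), hC w hw]
      · exact hq' v (Or.inl rfl)
    · rintro ⟨q', h1, h2⟩
      refine ⟨q', ?_⟩
      rintro w (rfl | hw)
      · exact h2
      · rw [h1 w hw, hC w hw]
  calc ∑ xq ∈ Cset μ x₀ q₀ A,
        p xq * (∑ x' ∈ Uset μ (insert v A) xq.1 xq.2, margP p x')
      = ∑ y : Y, ∑ xq ∈ (Cset μ x₀ q₀ A).filter (fun xq => μ v xq.1 xq.2 = y),
          p xq * (∑ x' ∈ Uset μ (insert v A) xq.1 xq.2, margP p x') := by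
        exact (Finset.sum_fiberwise_of_maps_to (fun xq _ => Finset.mem_univ _) _).symm
    _ = ∑ y : Y,
        (∑ xq ∈ (Cset μ x₀ q₀ A).filter (fun xq => μ v xq.1 xq.2 = y), p xq) *
          (∑ x' ∈ Finset.univ.biUnion
              (fun q' : Q => (Sset μ A x₀ q₀ q').filter (fun x' => μ v x' q' = y)),
            margP p x') := by
        refine Finset.sum_congr rfl fun y _ => ?_
        rw [Finset.sum_mul]
        refine Finset.sum_congr rfl fun xq hxq => ?_
        obtain ⟨hxqC, hxy⟩ := Finset.mem_filter.mp hxq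
        rw [key xq hxqC, hxy]
end
end
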